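/- arXiv:1308.5687 — 2 statements merged into one kernel-verified Lean document; each statement's English description precedes it below -/
import Mathlib

section
/- For every x ∈ ℝ^D with x ≠ 0, m > 0, and D ≥ 2, the function G(x) = (4π)^{-D/2} ∫₀^∞ t^{-D/2} e^{-t m² - ‖x‖²/(4t)} dt satisfies the bound |G(x)|² ≤ (2^{D-1}/(4π)^D) · ((D-2)!/(2m²)) · ‖x‖^{-2D+2}. In particular, G(x) → 0 as ‖x‖ → ∞ when D > 1. -/
/-!
Write the integrand as `e^{-t m²} · t^{-D/2} e^{-‖x‖²/(4t)}` and apply Cauchy–Schwarz on `(0, ∞)`.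
The first factor has square integral `1/(2m²)`; the substitution `t ↦ 1/t` turns the square
integral of the second into the Gamma integral `(2/‖x‖²)^{D-1} Γ(D-1)`. The resulting bound decays
like `‖x‖^{-(D-1)}`, which gives the limit.
-/

open MeasureTheory Real Set Filter

/-- The left side is the integrand produced by `integral_comp_rpow_Ioi` with `p = -1`. -/
lemma inv_subst_rpow_mul_exp_neg_mul (s b : ℝ) {t : ℝ} (ht : 0 < t) :
    (|(-1 : ℝ)| * t ^ ((-1 : ℝ) - 1)) • ((t ^ (-1 : ℝ)) ^ (s - 1 - 1) * exp (-(b * t ^ (-1 : ℝ))))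
      = t ^ (-s) * exp (-b / t) := by
  rw [rpow_neg_one, inv_rpow ht.le, ← rpow_neg ht.le, smul_eq_mul, abs_neg, abs_one, one_mul,
    ← mul_assoc, ← rpow_add ht]
  ring_nf

lemma integrableOn_rpow_neg_mul_exp_neg_div {s b : ℝ} (hs : 1 < s) (hb : 0 < b) :
    IntegrableOn (fun t : ℝ => t ^ (-s) * exp (-b / t)) (Ioi 0) := by
  have hGamma : IntegrableOn (fun y : ℝ => y ^ (s - 1 - 1) * exp (-(b * y))) (Ioi 0) := by
    simpa [rpow_one, neg_mul] using
      integrableOn_rpow_mul_exp_neg_mul_rpow (p := 1) (by linarith : -1 < s - 1 - 1) one_pos hb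
  refine ((integrableOn_Ioi_comp_rpow_iff _ (by norm_num : (-1 : ℝ) ≠ 0)).mpr hGamma).congr_fun
    (fun t ht => inv_subst_rpow_mul_exp_neg_mul s b ht) measurableSet_Ioi

lemma integral_rpow_neg_mul_exp_neg_div {s b : ℝ} (hs : 1 < s) (hb : 0 < b) :
    ∫ t in Ioi (0 : ℝ), t ^ (-s) * exp (-b / t) = (1 / b) ^ (s - 1) * Gamma (s - 1) := by
  rw [← integral_rpow_mul_exp_neg_mul_Ioi (by linarith) hb,
    ← integral_comp_rpow_Ioi (fun y => y ^ (s - 1 - 1) * exp (-(b * y)))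
      (by norm_num : (-1 : ℝ) ≠ 0)]
  exact setIntegral_congr_fun measurableSet_Ioi fun t ht =>
    (inv_subst_rpow_mul_exp_neg_mul s b ht).symm

theorem sq_integral_mul_le_integral_sq_mul_integral_sq {α : Type*} [MeasurableSpace α]
    {μ : Measure α} {f g : α → ℝ} (hf₀ : 0 ≤ᵐ[μ] f) (hg₀ : 0 ≤ᵐ[μ] g)
    (hf : MemLp f 2 μ) (hg : MemLp g 2 μ) :
    (∫ a, f a * g a ∂μ) ^ 2 ≤ (∫ a, f a ^ 2 ∂μ) * ∫ a, g a ^ 2 ∂μ := by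
  have hpq : (2 : ℝ).HolderConjugate 2 := .two_two
  have := integral_mul_le_Lp_mul_Lq_of_nonneg hpq hf₀ hg₀ (by simpa using hf) (by simpa using hg)
  have hsqrt : ∀ {c : ℝ}, 0 ≤ c → (c ^ (1 / 2 : ℝ)) ^ 2 = c := fun hc => by
    rw [← sqrt_eq_rpow, sq_sqrt hc]
  have hI₀ : 0 ≤ ∫ a, f a * g a ∂μ :=
    integral_nonneg_of_ae (by filter_upwards [hf₀, hg₀] with a ha hb using mul_nonneg ha hb)
  have hF₀ : 0 ≤ ∫ a, f a ^ 2 ∂μ := integral_nonneg fun a => sq_nonneg _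
  have hG₀ : 0 ≤ ∫ a, g a ^ 2 ∂μ := integral_nonneg fun a => sq_nonneg _
  simp only [rpow_two] at this
  calc (∫ a, f a * g a ∂μ) ^ 2
      ≤ ((∫ a, f a ^ 2 ∂μ) ^ (1 / 2 : ℝ) * (∫ a, g a ^ 2 ∂μ) ^ (1 / 2 : ℝ)) ^ 2 :=
        pow_le_pow_left₀ hI₀ this 2
    _ = (∫ a, f a ^ 2 ∂μ) * ∫ a, g a ^ 2 ∂μ := by rw [mul_pow, hsqrt hF₀, hsqrt hG₀]

theorem sq_integral_rpow_neg_mul_exp_neg_mul_sub_div_le {s a b : ℝ} (hs : 1 / 2 < s)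
    (ha : 0 < a) (hb : 0 < b) :
    (∫ t in Ioi (0 : ℝ), t ^ (-s) * exp (-t * a - b / t)) ^ 2
      ≤ 1 / (2 * a) * ((1 / (2 * b)) ^ (2 * s - 1) * Gamma (2 * s - 1)) := by
  set f : ℝ → ℝ := fun t => exp (-a * t)
  set g : ℝ → ℝ := fun t => t ^ (-s) * exp (-b / t)
  have hf_sq : ∀ t, f t ^ 2 = exp (-(2 * a) * t) := fun t => by
    rw [← exp_nat_mul]; push_cast; ring_nf
  have hg_sq : ∀ t ∈ Ioi (0 : ℝ), g t ^ 2 = t ^ (-(2 * s)) * exp (-(2 * b) / t) := fun t ht => by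
    rw [mul_pow, ← rpow_natCast, ← rpow_mul (le_of_lt ht), ← exp_nat_mul]; push_cast; ring_nf
  have hfg : ∫ t in Ioi (0 : ℝ), t ^ (-s) * exp (-t * a - b / t) =
      ∫ t in Ioi (0 : ℝ), f t * g t :=
    setIntegral_congr_fun measurableSet_Ioi fun t _ => by
      simp only [f, g, sub_eq_add_neg, exp_add]; ring_nf
  have hf : MemLp f 2 (volume.restrict (Ioi 0)) := by
    refine (memLp_two_iff_integrable_sq (by fun_prop)).mpr ?_
    simpa only [hf_sq] using (exp_neg_integrableOn_Ioi 0 (by positivity : 0 < 2 * a)).integrable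
  have hg : MemLp g 2 (volume.restrict (Ioi 0)) := by
    have hg_meas : ContinuousOn g (Ioi 0) := fun t ht =>
      ((continuousAt_rpow_const _ _ (.inl (ne_of_gt ht))).mul
        (continuousAt_const.div continuousAt_id (ne_of_gt ht)).rexp).continuousWithinAt
    refine (memLp_two_iff_integrable_sq (hg_meas.aestronglyMeasurable measurableSet_Ioi)).mpr ?_
    exact (integrableOn_rpow_neg_mul_exp_neg_div (by linarith) (by positivity)).congr_fun
      (fun t ht => (hg_sq t ht).symm) measurableSet_Ioi
  have hf₀ : 0 ≤ᵐ[volume.restrict (Ioi 0)] f := .of_forall fun t => (exp_pos _).le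
  have hg₀ : 0 ≤ᵐ[volume.restrict (Ioi 0)] g :=
    (ae_restrict_iff' measurableSet_Ioi).mpr <| .of_forall fun t ht =>
      mul_nonneg (rpow_nonneg (le_of_lt ht) _) (exp_pos _).le
  have hF : ∫ t in Ioi (0 : ℝ), f t ^ 2 = 1 / (2 * a) := by
    simp only [hf_sq]
    rw [integral_exp_mul_Ioi (by linarith) 0]; field_simp; simp
  have hG : ∫ t in Ioi (0 : ℝ), g t ^ 2 = (1 / (2 * b)) ^ (2 * s - 1) * Gamma (2 * s - 1) := by
    rw [setIntegral_congr_fun measurableSet_Ioi hg_sq,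
      integral_rpow_neg_mul_exp_neg_div (by linarith) (by positivity)]
  rw [hfg, ← hF, ← hG]
  exact sq_integral_mul_le_integral_sq_mul_integral_sq hf₀ hg₀ hf hg

noncomputable def massivePropagator (D : ℕ) (m r : ℝ) : ℝ :=
  (4 * π) ^ (-(D : ℝ) / 2) *
    ∫ t in Ioi (0 : ℝ), t ^ (-(D : ℝ) / 2) * exp (-t * m ^ 2 - r ^ 2 / (4 * t))

theorem sq_abs_massivePropagator_le {D : ℕ} (hD : 2 ≤ D) {m r : ℝ} (hm : 0 < m) (hr : 0 < r) :
    |massivePropagator D m r| ^ 2 ≤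
      2 ^ (D - 1) / (4 * π) ^ D * (((D - 2).factorial : ℝ) / (2 * m ^ 2)) *
        r ^ (-2 * (D : ℝ) + 2) := by
  obtain ⟨n, rfl⟩ : ∃ n, D = n + 2 := ⟨D - 2, by omega⟩
  have hI := sq_integral_rpow_neg_mul_exp_neg_mul_sub_div_le (s := ((n + 2 : ℕ) : ℝ) / 2)
    (by push_cast; linarith [n.cast_nonneg (α := ℝ)]) (pow_pos hm 2)
    (by positivity : 0 < r ^ 2 / 4)
  have hexp : 2 * (((n + 2 : ℕ) : ℝ) / 2) - 1 = ((n + 1 : ℕ) : ℝ) := by push_cast; ring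
  have hconst : ((4 * π) ^ (-((n + 2 : ℕ) : ℝ) / 2)) ^ 2 = ((4 * π) ^ (n + 2))⁻¹ := by
    rw [← rpow_natCast _ 2, ← rpow_mul (by positivity), ← rpow_natCast, ← rpow_neg (by positivity)]
    push_cast; ring_nf
  have hpow : r ^ (-2 * ((n + 2 : ℕ) : ℝ) + 2) = ((r ^ 2) ^ (n + 1))⁻¹ := by
    rw [← pow_mul, ← rpow_natCast, ← rpow_neg hr.le]; push_cast; ring_nf
  simp only [← neg_div, div_div (r ^ 2) 4] at hI
  have hGamma : Gamma ((n + 1 : ℕ) : ℝ) = n.factorial := by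
    rw [Nat.cast_succ, Gamma_nat_eq_factorial]
  rw [hexp, rpow_natCast, hGamma] at hI
  rw [massivePropagator, sq_abs, mul_pow, hconst, hpow, Nat.add_sub_cancel,
    show n + 2 - 1 = n + 1 by omega]
  calc ((4 * π) ^ (n + 2))⁻¹ * _
      ≤ ((4 * π) ^ (n + 2))⁻¹ *
          (1 / (2 * m ^ 2) * ((1 / (2 * (r ^ 2 / 4))) ^ (n + 1) * n.factorial)) :=
        mul_le_mul_of_nonneg_left hI (by positivity)
    _ = _ := by
        rw [show 1 / (2 * (r ^ 2 / 4)) = 2 * (r ^ 2)⁻¹ by ring]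
        ring

theorem tendsto_comap_norm_atTop_of_sq_abs_le_mul_rpow {E : Type*} [NormedAddCommGroup E]
    {f : E → ℝ} {C q : ℝ} (hq : q < 0) (hf : ∀ x, x ≠ 0 → |f x| ^ 2 ≤ C * ‖x‖ ^ q) :
    Tendsto f (comap norm atTop) (nhds 0) := by
  have hnorm : Tendsto (fun x : E => ‖x‖) (comap norm atTop) atTop := tendsto_comap
  have hbound : Tendsto (fun x : E => C * ‖x‖ ^ q) (comap norm atTop) (nhds 0) := by
    simpa using ((tendsto_rpow_neg_atTop (neg_pos.mpr hq)).comp hnorm).const_mul C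
  have hsq : Tendsto (fun x => |f x| ^ 2) (comap norm atTop) (nhds 0) := by
    refine tendsto_of_tendsto_of_tendsto_of_le_of_le' tendsto_const_nhds hbound
      (.of_forall fun x => sq_nonneg _) ?_
    filter_upwards [hnorm.eventually_gt_atTop 0] with x hx
    exact hf x (norm_pos_iff.mp hx)
  have habs : Tendsto (fun x => |f x|) (comap norm atTop) (nhds 0) := by
    simpa only [sqrt_sq (abs_nonneg _), sqrt_zero] using hsq.sqrt
  exact (tendsto_zero_iff_abs_tendsto_zero f).mpr habs

/-- bound and decay at infinity for the massive Euclidean propagator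
`G(x) = (4π)^{-D/2} ∫₀^∞ t^{-D/2} e^{-t m² - ‖x‖²/(4t)} dt` on `ℝ^D`. -/
theorem massive_propagator_bound_and_decay (D : ℕ) (hD : 2 ≤ D) (m : ℝ) (hm : 0 < m)
    (G : EuclideanSpace ℝ (Fin D) → ℝ)
    (hG : ∀ x : EuclideanSpace ℝ (Fin D), x ≠ 0 →
      G x = (4 * π) ^ (-(D : ℝ) / 2) *
        ∫ t in Ioi (0 : ℝ),
          t ^ (-(D : ℝ) / 2) * Real.exp (-t * m ^ 2 - ‖x‖ ^ 2 / (4 * t))) :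
    (∀ x : EuclideanSpace ℝ (Fin D), x ≠ 0 →
      |G x| ^ 2 ≤ 2 ^ (D - 1) / (4 * π) ^ D * (((D - 2).factorial : ℝ) / (2 * m ^ 2)) *
        ‖x‖ ^ (-2 * (D : ℝ) + 2)) ∧
    Tendsto G (comap norm atTop) (nhds 0) := by
  have hbound : ∀ x : EuclideanSpace ℝ (Fin D), x ≠ 0 →
      |G x| ^ 2 ≤ 2 ^ (D - 1) / (4 * π) ^ D * (((D - 2).factorial : ℝ) / (2 * m ^ 2)) *
        ‖x‖ ^ (-2 * (D : ℝ) + 2) := fun x hx => by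
    rw [hG x hx]
    exact sq_abs_massivePropagator_le hD hm (norm_pos_iff.mpr hx)
  have hdecay : -2 * (D : ℝ) + 2 < 0 := by
    have : (2 : ℝ) ≤ D := by exact_mod_cast hD
    linarith
  exact ⟨hbound, tendsto_comap_norm_atTop_of_sq_abs_le_mul_rpow hdecay hbound⟩
end

section
/- For m > 0, D ≥ 1, and any Schwartz function φ on ℝ^D, the function G_m defined by the absolutely convergent integral G_m(x) = (4π)^{-D/2} ∫₀^∞ t^{-D/2} e^{-tm² - ‖x‖²/(4t)} dt for x ≠ 0 satisfies the Fourier relation: the Fourier transform of G_m ⋆ φ at k equals (m² + ‖k‖²)^{-1} φ̂(k). Equivalently, (m² - Δ) G_m = δ in the sense of tempered distributions, where Δ = Σ ∂²/∂x_j² is the negative-definite Laplacian. -/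
open MeasureTheory Real Set

section AuxMP
variable (D : ℕ) (m : ℝ)

private noncomputable def eK (k : EuclideanSpace ℝ (Fin D)) :
    EuclideanSpace ℝ (Fin D) → ℂ :=
  fun x => Complex.exp (-Complex.I * ((inner ℝ k x : ℝ) : ℂ))

variable (k : EuclideanSpace ℝ (Fin D))

private lemma eK_cont : Continuous (eK D k) := by
  exact Complex.continuous_exp.comp
    (continuous_const.mul (Complex.continuous_ofReal.comp (continuous_const.inner continuous_id)))

private lemma eK_norm (x : EuclideanSpace ℝ (Fin D)) : ‖eK D k x‖ = 1 := by
  simp [eK, Complex.norm_exp]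

private lemma eK_add (x z : EuclideanSpace ℝ (Fin D)) :
    eK D k (x + z) = eK D k x * eK D k z := by
  simp only [eK, inner_add_right, Complex.ofReal_add, mul_add, Complex.exp_add]

private lemma gaussZ {t : ℝ} (ht : 0 < t) :
    (∫ z : EuclideanSpace ℝ (Fin D), eK D k z * (Real.exp (-(‖z‖ ^ 2 / (4 * t))) : ℂ))
      = (((4 * π * t) ^ ((D : ℝ) / 2) * Real.exp (-(t * ‖k‖ ^ 2)) : ℝ) : ℂ) := by
  have ht0 : t ≠ 0 := ne_of_gt ht
  have hb : (0:ℝ) < ((((4 * t)⁻¹ : ℝ)) : ℂ).re := by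
    rw [Complex.ofReal_re]; positivity
  have H := GaussianFourier.integral_cexp_neg_mul_sq_norm_add (V := EuclideanSpace ℝ (Fin D))
      (b := (((4 * t)⁻¹ : ℝ) : ℂ)) hb (-Complex.I) k
  have h1 : (∫ z : EuclideanSpace ℝ (Fin D), eK D k z * (Real.exp (-(‖z‖ ^ 2 / (4 * t))) : ℂ))
      = ∫ v : EuclideanSpace ℝ (Fin D),
          Complex.exp (-(((4 * t)⁻¹ : ℝ) : ℂ) * (‖v‖:ℂ) ^ 2 + (-Complex.I) * ((inner ℝ k v : ℝ):ℂ)) := by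
    refine integral_congr_ae (Filter.Eventually.of_forall fun z => ?_)
    simp only [eK]
    rw [Complex.ofReal_exp, ← Complex.exp_add]
    congr 1
    push_cast
    ring
  rw [h1, H, finrank_euclideanSpace_fin]
  have h2 : (↑π / (((4 * t)⁻¹ : ℝ) : ℂ)) = ((4 * π * t : ℝ) : ℂ) := by
    push_cast; field_simp
  have h3 : (-Complex.I) ^ 2 * (‖k‖:ℂ) ^ 2 / (4 * (((4 * t)⁻¹ : ℝ) : ℂ))
      = ((-(t * ‖k‖^2) : ℝ) : ℂ) := by
    rw [neg_pow, Complex.I_sq]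
    push_cast
    field_simp
  rw [h2, h3,
    show ((D:ℂ)/2) = (((D:ℝ)/2 : ℝ) : ℂ) by push_cast; ring,
    ← Complex.ofReal_cpow (by positivity), ← Complex.ofReal_exp, ← Complex.ofReal_mul]

private lemma gaussR {t : ℝ} (ht : 0 < t) :
    (∫ z : EuclideanSpace ℝ (Fin D), Real.exp (-(‖z‖ ^ 2 / (4 * t))))
      = (4 * π * t) ^ ((D : ℝ) / 2) := by
  have ht0 : t ≠ 0 := ne_of_gt ht
  have H := GaussianFourier.integral_rexp_neg_mul_sq_norm (V := EuclideanSpace ℝ (Fin D))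
      (b := (4*t)⁻¹) (by positivity)
  have h1 : (fun z : EuclideanSpace ℝ (Fin D) => Real.exp (-(‖z‖ ^ 2 / (4 * t))))
      = fun z : EuclideanSpace ℝ (Fin D) => Real.exp (-(4*t)⁻¹ * ‖z‖ ^ 2) := by
    funext z
    congr 1
    field_simp
  rw [h1, H, finrank_euclideanSpace_fin]
  congr 1
  field_simp

private lemma gaussInt {t : ℝ} (ht : 0 < t) :
    Integrable (fun z : EuclideanSpace ℝ (Fin D) => Real.exp (-(‖z‖ ^ 2 / (4 * t)))) := by
  have ht0 : t ≠ 0 := ne_of_gt ht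
  have hb : (0:ℝ) < ((((4 * t)⁻¹ : ℝ)) : ℂ).re := by
    rw [Complex.ofReal_re]; positivity
  have H := GaussianFourier.integrable_cexp_neg_mul_sq_norm_add (V := EuclideanSpace ℝ (Fin D))
      (b := (((4 * t)⁻¹ : ℝ) : ℂ)) hb 0 0
  refine H.norm.congr (Filter.Eventually.of_forall fun z => ?_)
  simp only [Complex.norm_exp, zero_mul, add_zero]
  rw [show (-(((4 * t)⁻¹ : ℝ) : ℂ) * ((‖z‖ : ℝ) : ℂ) ^ 2) = ((-(‖z‖ ^ 2 / (4 * t)) : ℝ) : ℂ) by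
      push_cast; field_simp, Complex.ofReal_re]

private noncomputable def pK (m t : ℝ) (z : EuclideanSpace ℝ (Fin D)) : ℝ :=
  t ^ (-(D:ℝ)/2) * Real.exp (-t * m ^ 2 - ‖z‖ ^ 2 / (4 * t))

private lemma pK_eq (t : ℝ) (z : EuclideanSpace ℝ (Fin D)) :
    pK D m t z = (t ^ (-(D:ℝ)/2) * Real.exp (-(t * m ^ 2))) * Real.exp (-(‖z‖ ^ 2 / (4 * t))) := by
  rw [pK, show -t * m ^ 2 - ‖z‖ ^ 2 / (4 * t) = (-(t * m ^ 2)) + (-(‖z‖ ^ 2 / (4 * t))) by ring,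
    Real.exp_add, mul_assoc]

private lemma pK_nonneg {t : ℝ} (ht : 0 < t) (z : EuclideanSpace ℝ (Fin D)) :
    0 ≤ pK D m t z := by
  rw [pK]; positivity

private lemma pK_meas :
    Measurable (fun q : (EuclideanSpace ℝ (Fin D)) × ℝ => pK D m q.2 q.1) := by
  apply Measurable.mul
  · exact (by fun_prop : Measurable fun t : ℝ => t ^ (-(D:ℝ)/2)).comp measurable_snd
  · exact (((measurable_snd.neg.mul measurable_const).sub
      (((measurable_norm.comp measurable_fst).pow_const 2).div
        (measurable_const.mul measurable_snd)))).exp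

private lemma rpow_calc {t : ℝ} (ht : 0 < t) :
    t ^ (-(D:ℝ)/2) * (4 * π * t) ^ ((D:ℝ)/2) = (4 * π) ^ ((D:ℝ)/2) := by
  rw [neg_div, show (4*π*t) = (4*π)*t by ring, Real.mul_rpow (by positivity) ht.le,
    mul_comm ((4*π) ^ ((D:ℝ)/2)) (t ^ ((D:ℝ)/2)), ← mul_assoc, ← Real.rpow_add ht,
    neg_add_cancel, Real.rpow_zero, one_mul]

private lemma zIntegrable {t : ℝ} (ht : 0 < t) :
    Integrable (fun z : EuclideanSpace ℝ (Fin D) => pK D m t z) := by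
  simp only [pK_eq]
  exact (gaussInt D ht).const_mul _

private lemma zIntegral {t : ℝ} (ht : 0 < t) :
    (∫ z : EuclideanSpace ℝ (Fin D), pK D m t z)
      = (4 * π) ^ ((D:ℝ)/2) * Real.exp (-(m ^ 2 * t)) := by
  simp only [pK_eq]
  rw [MeasureTheory.integral_const_mul, gaussR D ht,
    show t ^ (-(D:ℝ)/2) * Real.exp (-(t * m ^ 2)) * (4 * π * t) ^ ((D:ℝ)/2)
      = (t ^ (-(D:ℝ)/2) * (4 * π * t) ^ ((D:ℝ)/2)) * Real.exp (-(t * m ^ 2)) by ring,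
    rpow_calc D ht, show -(t * m ^ 2) = -(m ^ 2 * t) by ring]

private lemma expIoi {c : ℝ} (hc : 0 < c) :
    ∫ t in Ioi (0:ℝ), Real.exp (-(c * t)) = c⁻¹ := by
  have h := integral_comp_mul_left_Ioi (fun x => Real.exp (-x)) 0 hc
  rw [mul_zero] at h
  rw [h, integral_exp_neg_Ioi, neg_zero, Real.exp_zero, smul_eq_mul, mul_one]

private lemma Kint (hm : 0 < m) :
    Integrable (fun q : (EuclideanSpace ℝ (Fin D)) × ℝ => pK D m q.2 q.1)
      ((volume : Measure (EuclideanSpace ℝ (Fin D))).prod (volume.restrict (Ioi 0))) := by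
  rw [integrable_prod_iff' (pK_meas D m).aestronglyMeasurable]
  constructor
  · refine (ae_restrict_iff' measurableSet_Ioi).mpr (Filter.Eventually.of_forall fun t ht => ?_)
    exact zIntegrable D m ht
  · have hint : Integrable (fun t => (4*π) ^ ((D:ℝ)/2) * Real.exp (-(m^2) * t))
        (volume.restrict (Ioi (0:ℝ))) :=
      (exp_neg_integrableOn_Ioi 0 (by positivity : (0:ℝ) < m^2)).const_mul _
    refine hint.congr ((ae_restrict_iff' measurableSet_Ioi).mpr
      (Filter.Eventually.of_forall fun t ht => ?_))
    show (4*π) ^ ((D:ℝ)/2) * Real.exp (-(m^2) * t)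
      = ∫ z : EuclideanSpace ℝ (Fin D), ‖pK D m t z‖
    have h1 : (∫ z : EuclideanSpace ℝ (Fin D), ‖pK D m t z‖)
        = ∫ z : EuclideanSpace ℝ (Fin D), pK D m t z := by
      refine integral_congr_ae (Filter.Eventually.of_forall fun z => ?_)
      show ‖pK D m t z‖ = pK D m t z
      rw [Real.norm_eq_abs, abs_of_nonneg (pK_nonneg D m ht z)]
    rw [h1, zIntegral D m ht]
    ring_nf

private noncomputable def gK : EuclideanSpace ℝ (Fin D) → ℝ :=
  fun z => (4 * π) ^ (-(D:ℝ)/2) * ∫ t in Ioi (0:ℝ), pK D m t z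

private lemma gK_meas : StronglyMeasurable (gK D m) :=
  ((pK_meas D m).stronglyMeasurable.integral_prod_right').const_mul _

private lemma gK_integrable (hm : 0 < m) : Integrable (gK D m) :=
  ((Kint D m hm).integral_prod_left).const_mul _

private lemma KintC (hm : 0 < m) :
    Integrable (fun q : (EuclideanSpace ℝ (Fin D)) × ℝ => eK D k q.1 * ((pK D m q.2 q.1 : ℝ) : ℂ))
      ((volume : Measure (EuclideanSpace ℝ (Fin D))).prod (volume.restrict (Ioi 0))) := by
  refine ((Kint D m hm).ofReal).bdd_mul ?_ (Filter.Eventually.of_forall fun q => le_of_eq (eK_norm D k q.1))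
  exact ((eK_cont D k).comp continuous_fst).aestronglyMeasurable

private lemma hB (hm : 0 < m) :
    (∫ z : EuclideanSpace ℝ (Fin D), eK D k z * ((gK D m z : ℝ) : ℂ))
      = (((m ^ 2 + ‖k‖ ^ 2)⁻¹ : ℝ) : ℂ) := by
  have hc2 : (0:ℝ) < m ^ 2 + ‖k‖ ^ 2 := by positivity
  calc (∫ z : EuclideanSpace ℝ (Fin D), eK D k z * ((gK D m z : ℝ) : ℂ))
      = ∫ z : EuclideanSpace ℝ (Fin D), (((4 * π) ^ (-(D:ℝ)/2) : ℝ) : ℂ) *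
          ∫ t in Ioi (0:ℝ), eK D k z * ((pK D m t z : ℝ) : ℂ) := by
        refine integral_congr_ae (Filter.Eventually.of_forall fun z => ?_)
        show eK D k z * ((gK D m z : ℝ) : ℂ)
          = (((4 * π) ^ (-(D:ℝ)/2) : ℝ) : ℂ) * ∫ t in Ioi (0:ℝ), eK D k z * ((pK D m t z : ℝ) : ℂ)
        rw [MeasureTheory.integral_const_mul,
          show (∫ t in Ioi (0:ℝ), ((pK D m t z : ℝ) : ℂ))
              = ((∫ t in Ioi (0:ℝ), pK D m t z : ℝ) : ℂ) from integral_ofReal, gK]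
        push_cast
        ring
    _ = (((4 * π) ^ (-(D:ℝ)/2) : ℝ) : ℂ) *
          ∫ z : EuclideanSpace ℝ (Fin D), ∫ t in Ioi (0:ℝ), eK D k z * ((pK D m t z : ℝ) : ℂ) :=
        MeasureTheory.integral_const_mul _ _
    _ = (((4 * π) ^ (-(D:ℝ)/2) : ℝ) : ℂ) *
          ∫ t in Ioi (0:ℝ), ∫ z : EuclideanSpace ℝ (Fin D), eK D k z * ((pK D m t z : ℝ) : ℂ) := by
        rw [integral_integral_swap (KintC D m k hm)]
    _ = (((4 * π) ^ (-(D:ℝ)/2) : ℝ) : ℂ) *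
          ∫ t in Ioi (0:ℝ), (((4 * π) ^ ((D:ℝ)/2) * Real.exp (-((m ^ 2 + ‖k‖ ^ 2) * t)) : ℝ) : ℂ) := by
        congr 1
        refine integral_congr_ae ((ae_restrict_iff' measurableSet_Ioi).mpr
          (Filter.Eventually.of_forall fun t ht => ?_))
        show (∫ z : EuclideanSpace ℝ (Fin D), eK D k z * ((pK D m t z : ℝ) : ℂ))
          = (((4 * π) ^ ((D:ℝ)/2) * Real.exp (-((m ^ 2 + ‖k‖ ^ 2) * t)) : ℝ) : ℂ)
        have h1 : (∫ z : EuclideanSpace ℝ (Fin D), eK D k z * ((pK D m t z : ℝ) : ℂ))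
            = ((t ^ (-(D:ℝ)/2) * Real.exp (-(t * m ^ 2)) : ℝ) : ℂ) *
                ∫ z : EuclideanSpace ℝ (Fin D), eK D k z * ((Real.exp (-(‖z‖ ^ 2 / (4 * t))) : ℝ) : ℂ) := by
          rw [← MeasureTheory.integral_const_mul]
          refine integral_congr_ae (Filter.Eventually.of_forall fun z => ?_)
          show eK D k z * ((pK D m t z : ℝ) : ℂ)
            = ((t ^ (-(D:ℝ)/2) * Real.exp (-(t * m ^ 2)) : ℝ) : ℂ) *
                (eK D k z * ((Real.exp (-(‖z‖ ^ 2 / (4 * t))) : ℝ) : ℂ))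
          rw [pK_eq]
          push_cast
          ring
        rw [h1, gaussZ D k ht, ← Complex.ofReal_mul]
        congr 1
        rw [show t ^ (-(D:ℝ)/2) * Real.exp (-(t * m ^ 2)) *
              ((4 * π * t) ^ ((D:ℝ)/2) * Real.exp (-(t * ‖k‖ ^ 2)))
            = (t ^ (-(D:ℝ)/2) * (4 * π * t) ^ ((D:ℝ)/2)) *
              (Real.exp (-(t * m ^ 2)) * Real.exp (-(t * ‖k‖ ^ 2))) by ring,
          rpow_calc D ht, ← Real.exp_add]
        congr 1
        ring
    _ = (((4 * π) ^ (-(D:ℝ)/2) : ℝ) : ℂ) *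
          (((4 * π) ^ ((D:ℝ)/2) * (m ^ 2 + ‖k‖ ^ 2)⁻¹ : ℝ) : ℂ) := by
        congr 1
        rw [show (∫ t in Ioi (0:ℝ),
              (((4 * π) ^ ((D:ℝ)/2) * Real.exp (-((m ^ 2 + ‖k‖ ^ 2) * t)) : ℝ) : ℂ))
            = ((∫ t in Ioi (0:ℝ),
                (4 * π) ^ ((D:ℝ)/2) * Real.exp (-((m ^ 2 + ‖k‖ ^ 2) * t)) : ℝ) : ℂ)
          from integral_ofReal, MeasureTheory.integral_const_mul, expIoi hc2]
    _ = (((m ^ 2 + ‖k‖ ^ 2)⁻¹ : ℝ) : ℂ) := by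
        rw [← Complex.ofReal_mul]
        congr 1
        rw [neg_div, Real.rpow_neg (by positivity), ← mul_assoc,
          inv_mul_cancel₀ (by positivity), one_mul]


private lemma mainMP (D : ℕ) (hD : 1 ≤ D) (m : ℝ) (hm : 0 < m)
    (G : EuclideanSpace ℝ (Fin D) → ℝ)
    (hG : ∀ x : EuclideanSpace ℝ (Fin D), x ≠ 0 →
      G x = (4 * π) ^ (-(D : ℝ) / 2) *
        ∫ t in Ioi (0 : ℝ),
          t ^ (-(D : ℝ) / 2) * Real.exp (-t * m ^ 2 - ‖x‖ ^ 2 / (4 * t)))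
    (φ : SchwartzMap (EuclideanSpace ℝ (Fin D)) ℂ)
    (k : EuclideanSpace ℝ (Fin D)) :
    (∫ x : EuclideanSpace ℝ (Fin D),
        eK D k x * ∫ y : EuclideanSpace ℝ (Fin D), ((G (x - y) : ℝ) : ℂ) * φ y)
      = (((m ^ 2 + ‖k‖ ^ 2)⁻¹ : ℝ) : ℂ) *
          ∫ x : EuclideanSpace ℝ (Fin D), eK D k x * φ x := by
  haveI : Nontrivial (EuclideanSpace ℝ (Fin D)) := by
    refine nontrivial_of_ne (EuclideanSpace.single (⟨0, hD⟩ : Fin D) (1:ℝ)) 0 ?_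
    intro h
    have h2 := congrArg (fun v : EuclideanSpace ℝ (Fin D) => v (⟨0, hD⟩ : Fin D)) h
    simp [EuclideanSpace.single_apply] at h2
  haveI : NullSingletonClass (volume : Measure (EuclideanSpace ℝ (Fin D))) := inferInstance
  have hg : ∀ z : EuclideanSpace ℝ (Fin D), z ≠ 0 → G z = gK D m z := by
    intro z hz
    rw [hG z hz]; rfl
  have hGg : ∀ x : EuclideanSpace ℝ (Fin D),
      (∫ y : EuclideanSpace ℝ (Fin D), ((G (x - y) : ℝ) : ℂ) * φ y)
        = ∫ y : EuclideanSpace ℝ (Fin D), ((gK D m (x - y) : ℝ) : ℂ) * φ y := by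
    intro x
    refine integral_congr_ae ?_
    have hx : ∀ᵐ (y : EuclideanSpace ℝ (Fin D)), y ≠ x := by
      have h0 : volume ({x} : Set (EuclideanSpace ℝ (Fin D))) = 0 := measure_singleton x
      rw [ae_iff]
      convert h0 using 2
      ext y; simp
    filter_upwards [hx] with y hy
    show ((G (x - y) : ℝ) : ℂ) * φ y = ((gK D m (x - y) : ℝ) : ℂ) * φ y
    rw [hg (x - y) (sub_ne_zero.mpr (Ne.symm hy))]
  have hconv : ∀ x : EuclideanSpace ℝ (Fin D),
      (∫ y : EuclideanSpace ℝ (Fin D), ((gK D m (x - y) : ℝ) : ℂ) * φ y)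
        = ∫ z : EuclideanSpace ℝ (Fin D), ((gK D m z : ℝ) : ℂ) * φ (x - z) := by
    intro x
    rw [← integral_sub_left_eq_self
      (fun z : EuclideanSpace ℝ (Fin D) => ((gK D m z : ℝ) : ℂ) * φ (x - z)) volume x]
    refine integral_congr_ae (Filter.Eventually.of_forall fun y => ?_)
    show ((gK D m (x - y) : ℝ) : ℂ) * φ y = ((gK D m (x - y) : ℝ) : ℂ) * φ (x - (x - y))
    rw [sub_sub_cancel]
  have hmeas : AEStronglyMeasurable
      (fun q : (EuclideanSpace ℝ (Fin D)) × (EuclideanSpace ℝ (Fin D)) =>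
        eK D k q.1 * (((gK D m q.2 : ℝ) : ℂ) * φ (q.1 - q.2)))
      ((volume : Measure (EuclideanSpace ℝ (Fin D))).prod volume) := by
    refine AEStronglyMeasurable.mul ?_ (AEStronglyMeasurable.mul ?_ ?_)
    · exact ((eK_cont D k).comp continuous_fst).aestronglyMeasurable
    · exact ((Complex.continuous_ofReal.comp_stronglyMeasurable
        ((gK_meas D m).comp_measurable measurable_snd))).aestronglyMeasurable
    · exact (φ.continuous.comp (continuous_fst.sub continuous_snd)).aestronglyMeasurable
  have Fint : Integrable (Function.uncurry fun x z =>
        eK D k x * (((gK D m z : ℝ) : ℂ) * φ (x - z)))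
      ((volume : Measure (EuclideanSpace ℝ (Fin D))).prod volume) := by
    refine (integrable_prod_iff' hmeas).mpr ⟨?_, ?_⟩
    · refine Filter.Eventually.of_forall fun z => ?_
      show Integrable (fun x : EuclideanSpace ℝ (Fin D) =>
        eK D k x * (((gK D m z : ℝ) : ℂ) * φ (x - z))) volume
      have h1 : Integrable (fun x : EuclideanSpace ℝ (Fin D) => φ (x - z)) volume :=
        (φ.integrable).comp_sub_right z
      have h2 := h1.bdd_mul ((eK_cont D k).aestronglyMeasurable)
        (Filter.Eventually.of_forall fun x => le_of_eq (eK_norm D k x))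
      have h3 := h2.const_mul (((gK D m z : ℝ) : ℂ))
      refine h3.congr (Filter.Eventually.of_forall fun x => ?_)
      show ((gK D m z : ℝ) : ℂ) * (eK D k x * φ (x - z))
        = eK D k x * (((gK D m z : ℝ) : ℂ) * φ (x - z))
      ring
    · have hgi : Integrable
          (fun z => |gK D m z| * ∫ x : EuclideanSpace ℝ (Fin D), ‖φ x‖) volume :=
        ((gK_integrable D m hm).abs).mul_const _
      refine hgi.congr (Filter.Eventually.of_forall fun z => ?_)
      show |gK D m z| * (∫ x : EuclideanSpace ℝ (Fin D), ‖φ x‖)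
        = ∫ x : EuclideanSpace ℝ (Fin D), ‖eK D k x * (((gK D m z : ℝ) : ℂ) * φ (x - z))‖
      have h1 : ∀ x : EuclideanSpace ℝ (Fin D),
          ‖eK D k x * (((gK D m z : ℝ) : ℂ) * φ (x - z))‖ = |gK D m z| * ‖φ (x - z)‖ := by
        intro x
        rw [norm_mul, norm_mul, eK_norm, one_mul, Complex.norm_real, Real.norm_eq_abs]
      have h2 : (∫ x : EuclideanSpace ℝ (Fin D),
            ‖eK D k x * (((gK D m z : ℝ) : ℂ) * φ (x - z))‖)
          = ∫ x : EuclideanSpace ℝ (Fin D), |gK D m z| * ‖φ (x - z)‖ :=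
        integral_congr_ae (Filter.Eventually.of_forall fun x => h1 x)
      rw [h2, MeasureTheory.integral_const_mul,
        integral_sub_right_eq_self (fun x : EuclideanSpace ℝ (Fin D) => ‖φ x‖) z]
  calc (∫ x : EuclideanSpace ℝ (Fin D),
        eK D k x * ∫ y : EuclideanSpace ℝ (Fin D), ((G (x - y) : ℝ) : ℂ) * φ y)
      = ∫ x : EuclideanSpace ℝ (Fin D), ∫ z : EuclideanSpace ℝ (Fin D),
          eK D k x * (((gK D m z : ℝ) : ℂ) * φ (x - z)) := by
        refine integral_congr_ae (Filter.Eventually.of_forall fun x => ?_)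
        show eK D k x * (∫ y : EuclideanSpace ℝ (Fin D), ((G (x - y) : ℝ) : ℂ) * φ y)
          = ∫ z : EuclideanSpace ℝ (Fin D), eK D k x * (((gK D m z : ℝ) : ℂ) * φ (x - z))
        rw [hGg x, hconv x, MeasureTheory.integral_const_mul]
    _ = ∫ z : EuclideanSpace ℝ (Fin D), ∫ x : EuclideanSpace ℝ (Fin D),
          eK D k x * (((gK D m z : ℝ) : ℂ) * φ (x - z)) := integral_integral_swap Fint
    _ = ∫ z : EuclideanSpace ℝ (Fin D), (eK D k z * ((gK D m z : ℝ) : ℂ)) *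
          ∫ x : EuclideanSpace ℝ (Fin D), eK D k x * φ x := by
        refine integral_congr_ae (Filter.Eventually.of_forall fun z => ?_)
        show (∫ x : EuclideanSpace ℝ (Fin D), eK D k x * (((gK D m z : ℝ) : ℂ) * φ (x - z)))
          = (eK D k z * ((gK D m z : ℝ) : ℂ)) * ∫ x : EuclideanSpace ℝ (Fin D), eK D k x * φ x
        have e1 : (∫ x : EuclideanSpace ℝ (Fin D),
              eK D k x * (((gK D m z : ℝ) : ℂ) * φ (x - z)))
            = ((gK D m z : ℝ) : ℂ) * ∫ x : EuclideanSpace ℝ (Fin D), eK D k x * φ (x - z) := by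
          rw [← MeasureTheory.integral_const_mul]
          refine integral_congr_ae (Filter.Eventually.of_forall fun x => ?_)
          show eK D k x * (((gK D m z : ℝ) : ℂ) * φ (x - z))
            = ((gK D m z : ℝ) : ℂ) * (eK D k x * φ (x - z))
          ring
        have e2 : (∫ x : EuclideanSpace ℝ (Fin D), eK D k x * φ (x - z))
            = eK D k z * ∫ x : EuclideanSpace ℝ (Fin D), eK D k x * φ x := by
          rw [← integral_add_right_eq_self (μ := (volume : Measure (EuclideanSpace ℝ (Fin D))))
            (fun x => eK D k x * φ (x - z)) z]
          have h3 : ∀ x : EuclideanSpace ℝ (Fin D),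
              eK D k (x + z) * φ (x + z - z) = eK D k z * (eK D k x * φ x) := by
            intro x; rw [add_sub_cancel_right, eK_add]; ring
          rw [integral_congr_ae (Filter.Eventually.of_forall h3), MeasureTheory.integral_const_mul]
        rw [e1, e2]; ring
    _ = (∫ z : EuclideanSpace ℝ (Fin D), eK D k z * ((gK D m z : ℝ) : ℂ)) *
          ∫ x : EuclideanSpace ℝ (Fin D), eK D k x * φ x :=
        MeasureTheory.integral_mul_const _ _
    _ = (((m ^ 2 + ‖k‖ ^ 2)⁻¹ : ℝ) : ℂ) *
          ∫ x : EuclideanSpace ℝ (Fin D), eK D k x * φ x := by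
        rw [hB D m k hm]

end AuxMP

/-- the massive Euclidean propagator
`G_m(x) = (4π)^{-D/2} ∫₀^∞ t^{-D/2} e^{-tm² - ‖x‖²/(4t)} dt` is the Green
function of the Helmholtz operator `m² - Δ`: for every Schwartz function `φ`,
the Fourier transform of `G_m ⋆ φ` at `k` is `(m² + ‖k‖²)^{-1} φ̂(k)`. -/
theorem massive_propagator_fourier (D : ℕ) (hD : 1 ≤ D) (m : ℝ) (hm : 0 < m)
    (G : EuclideanSpace ℝ (Fin D) → ℝ)
    (hG : ∀ x : EuclideanSpace ℝ (Fin D), x ≠ 0 →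
      G x = (4 * π) ^ (-(D : ℝ) / 2) *
        ∫ t in Ioi (0 : ℝ),
          t ^ (-(D : ℝ) / 2) * Real.exp (-t * m ^ 2 - ‖x‖ ^ 2 / (4 * t)))
    (φ : SchwartzMap (EuclideanSpace ℝ (Fin D)) ℂ)
    (k : EuclideanSpace ℝ (Fin D)) :
    (∫ x : EuclideanSpace ℝ (Fin D),
        Complex.exp (-Complex.I * (((inner ℝ k x : ℝ)) : ℂ)) *
          ∫ y : EuclideanSpace ℝ (Fin D), ((G (x - y) : ℝ) : ℂ) * φ y)
      = (((m ^ 2 + ‖k‖ ^ 2)⁻¹ : ℝ) : ℂ) *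
          ∫ x : EuclideanSpace ℝ (Fin D),
            Complex.exp (-Complex.I * (((inner ℝ k x : ℝ)) : ℂ)) * φ x :=
  mainMP D hD m hm G hG φ k
end
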